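/- Each piece in a convex geometry is a piece of a unique element: if P is a piece of x and also a piece of x', then x = x'. -/

import Mathlib

open Set

variable {X Y Z : Type*}

/-- A choice function: `f A ⊆ A` for all `A`. -/
def IsChoice (f : Set X → Set X) : Prop := ∀ A, f A ⊆ A

/-- A Plott function: choice function satisfying path independence. -/
def IsPlott (f : Set X → Set X) : Prop :=
  IsChoice f ∧ ∀ A B : Set X, f (A ∪ B) = f (f A ∪ B)

/-- Closure in a family of sets: intersection of all members containing `A`. -/
def closureOf (𝓕 : Set (Set X)) (A : Set X) : Set X := ⋂₀ {F | F ∈ 𝓕 ∧ A ⊆ F}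

/-- Extreme points of `A` with respect to the closure system `𝓕`. -/
def extPts (𝓕 : Set (Set X)) (A : Set X) : Set X :=
  {a ∈ A | a ∉ closureOf 𝓕 (A \ {a})}

/-- Convex geometry: contains `univ`, closed under intersection, MKM property. -/
def IsConvexGeometry (𝓕 : Set (Set X)) : Prop :=
  Set.univ ∈ 𝓕 ∧ (∀ F ∈ 𝓕, ∀ G ∈ 𝓕, F ∩ G ∈ 𝓕) ∧
    ∀ A : Set X, closureOf 𝓕 A = closureOf 𝓕 (extPts 𝓕 A)

/-- `P` is a piece of `x`: a closed set not containing `x` such that every closed set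
strictly containing `P` contains `x`. -/
def IsPiece (𝓕 : Set (Set X)) (P : Set X) (x : X) : Prop :=
  P ∈ 𝓕 ∧ x ∉ P ∧ ∀ Q ∈ 𝓕, P ⊂ Q → x ∈ Q

/-! The MKM property alone excludes two elements sharing a piece `P`: in `A = P ∪ {x, x'}`
each of `x`, `x'` lies in the closure of the rest of `A`, so every extreme point of `A` lies
in `P`, and then so does the closure of `A`, which contains `x`. -/

section ClosureSystem

variable {𝓕 : Set (Set X)} {A B P F : Set X} {y z : X}

lemma subset_closureOf (𝓕 : Set (Set X)) (A : Set X) : A ⊆ closureOf 𝓕 A :=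
  fun _ ha _ hF => hF.2 ha

lemma closureOf_subset_of_mem (hF : F ∈ 𝓕) (h : A ⊆ F) : closureOf 𝓕 A ⊆ F :=
  sInter_subset_of_mem ⟨hF, h⟩

lemma subset_of_extPts_subset (hmkm : ∀ A : Set X, closureOf 𝓕 A = closureOf 𝓕 (extPts 𝓕 A))
    (hF : F ∈ 𝓕) (h : extPts 𝓕 A ⊆ F) : A ⊆ F := by
  calc A ⊆ closureOf 𝓕 A := subset_closureOf 𝓕 A
    _ = closureOf 𝓕 (extPts 𝓕 A) := hmkm A
    _ ⊆ F := closureOf_subset_of_mem hF h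

/-- Any closed set containing `B` strictly contains `P`, hence contains `y`. -/
lemma IsPiece.mem_closureOf (hy : IsPiece 𝓕 P y) (hPB : P ⊆ B) (hBP : ¬B ⊆ P) :
    y ∈ closureOf 𝓕 B :=
  fun _ ⟨hQ, hBQ⟩ => hy.2.2 _ hQ ⟨hPB.trans hBQ, fun hQP => hBP (hBQ.trans hQP)⟩

lemma IsPiece.notMem_extPts (hy : IsPiece 𝓕 P y) (hPA : P ⊆ A) (hzA : z ∈ A) (hzP : z ∉ P)
    (hzy : z ≠ y) : y ∉ extPts 𝓕 A := fun hext =>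
  hext.2 <| hy.mem_closureOf
    (fun _ ha => ⟨hPA ha, fun hay => hy.2.1 (hay ▸ ha)⟩)
    (fun h => hzP (h ⟨hzA, hzy⟩))

end ClosureSystem

theorem piece_unique_element_general {X : Type*}
    (𝓕 : Set (Set X)) (h𝓕 : IsConvexGeometry 𝓕)
    (P : Set X) (x x' : X) (hx : IsPiece 𝓕 P x) (hx' : IsPiece 𝓕 P x') :
    x = x' := by
  by_contra hne
  set A : Set X := insert x (insert x' P)
  have hPA : P ⊆ A := (subset_insert _ _).trans (subset_insert _ _)
  have hxA : x ∈ A := mem_insert _ _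
  have hx'A : x' ∈ A := mem_insert_of_mem _ (mem_insert _ _)
  have hext : extPts 𝓕 A ⊆ P := by
    rintro a ⟨rfl | rfl | haP, ha⟩
    · exact absurd ⟨hxA, ha⟩ (hx.notMem_extPts hPA hx'A hx'.2.1 (Ne.symm hne))
    · exact absurd ⟨hx'A, ha⟩ (hx'.notMem_extPts hPA hxA hx.2.1 hne)
    · exact haP
  exact hx.2.1 (subset_of_extPts_subset h𝓕.2.2 hx.1 hext hxA)

/-- a piece is a piece of a unique element. -/
theorem piece_unique_element {X : Type*} [Fintype X]
    (𝓕 : Set (Set X)) (h𝓕 : IsConvexGeometry 𝓕)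
    (P : Set X) (x x' : X) (hx : IsPiece 𝓕 P x) (hx' : IsPiece 𝓕 P x') :
    x = x' :=
  piece_unique_element_general 𝓕 h𝓕 P x x' hx hx'
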